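/- arXiv:2111.02811 — 6 statements merged into one kernel-verified Lean document; each statement's English description precedes it below -/
import Mathlib

section
/- Let v be a valuation on a field K with value group Γ, and let μ be a valuation on K[x] extending v, with value group Γ_μ and residue field k_μ (with k the residue field of v). Then the Abhyankar inequality holds: rr(Γ_μ/Γ) + trdeg(k_μ/k) ≤ 1, where rr denotes the rational rank (the ℚ-dimension of the tensor product with ℚ). -/
open Polynomial

section Preamble

variable {Λ : Type*} [AddCommGroup Λ] [LinearOrder Λ] [IsOrderedAddMonoid Λ]

/-- A (Krull) valuation on a commutative ring, written additively, with value `⊤` at `0`. -/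
def IsVal {R : Type*} [CommRing R] (μ : R → WithTop Λ) : Prop :=
  μ 0 = ⊤ ∧ μ 1 = 0 ∧ (∀ a b, μ (a * b) = μ a + μ b) ∧ ∀ a b, min (μ a) (μ b) ≤ μ (a + b)

variable {K : Type*} [Field K]

/-- `μ` is a valuation on `K[x]` whose restriction to `K` is `v`. -/
def ExtendsVal (v : K → WithTop Λ) (μ : Polynomial K → WithTop Λ) : Prop :=
  ∀ a : K, μ (Polynomial.C a) = v a

/-- `a ∼_μ b`: the initial terms of `a` and `b` in the graded algebra of `μ` coincide. -/
def MuEquiv (μ : Polynomial K → WithTop Λ) (a b : Polynomial K) : Prop :=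
  (μ a = μ b ∧ μ a < μ (a - b)) ∨ (μ a = ⊤ ∧ μ b = ⊤)

/-- `h ∣_μ g` : the initial term of `h` divides the initial term of `g` in the
graded algebra `G_μ`. -/
def MuDvd (μ : Polynomial K → WithTop Λ) (h g : Polynomial K) : Prop :=
  ∃ c, MuEquiv μ (h * c) g

/-- `g` is `μ`-minimal: `g ∤_μ f` for all nonzero `f` of degree smaller than `deg g`. -/
def MuMinimal (μ : Polynomial K → WithTop Λ) (g : Polynomial K) : Prop :=
  ∀ f : Polynomial K, f ≠ 0 → f.degree < g.degree → ¬ MuDvd μ g f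

/-- `g` is `μ`-irreducible: the principal ideal of `G_μ` generated by the initial term of `g`
is a nonzero prime ideal. -/
def MuIrreducible (μ : Polynomial K → WithTop Λ) (g : Polynomial K) : Prop :=
  μ g ≠ ⊤ ∧ ¬ MuDvd μ g 1 ∧ ∀ a b : Polynomial K, MuDvd μ g (a * b) → MuDvd μ g a ∨ MuDvd μ g b

/-- A (MacLane–Vaquié) key polynomial for `μ`: monic, `μ`-minimal and `μ`-irreducible. -/
def IsKeyPol (μ : Polynomial K → WithTop Λ) (φ : Polynomial K) : Prop :=
  φ.Monic ∧ MuMinimal μ φ ∧ MuIrreducible μ φ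

/-- A key polynomial for `μ` of minimal degree. -/
def MinKeyPol (μ : Polynomial K → WithTop Λ) (φ : Polynomial K) : Prop :=
  IsKeyPol μ φ ∧ ∀ ψ : Polynomial K, IsKeyPol μ ψ → φ.degree ≤ ψ.degree

/-- The coefficients of the `g`-adic expansion `f = ∑ a_s g^s`, `deg a_s < deg g`. -/
noncomputable def adicCoeff (g : Polynomial K) : Polynomial K → ℕ → Polynomial K
  | f, 0 => f %ₘ g
  | f, (s + 1) => adicCoeff g (f /ₘ g) s

/-- The truncation `μ_g` of `μ` : `μ_g (∑ a_s g^s) = min_s μ (a_s g^s)`. -/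
noncomputable def truncVal (μ : Polynomial K → WithTop Λ) (g f : Polynomial K) : WithTop Λ :=
  (Finset.range (f.natDegree + 1)).inf fun s => μ (adicCoeff g f s * g ^ s)

/-- The augmented valuation `[μ; φ, γ]`, acting on `φ`-expansions by
`ν(∑ a_s φ^s) = min_s (μ(a_s) + s γ)`. -/
noncomputable def augVal (μ : Polynomial K → WithTop Λ) (φ : Polynomial K) (γ : WithTop Λ)
    (f : Polynomial K) : WithTop Λ :=
  (Finset.range (f.natDegree + 1)).inf fun s => μ (adicCoeff φ f s) + s • γ

end Preamble

section Abhyankar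

open TensorProduct

variable {Λ : Type*} [AddCommGroup Λ] [LinearOrder Λ] [IsOrderedAddMonoid Λ]

theorem IsVal.neg_eq {R : Type*} [CommRing R] {w : R → WithTop Λ} (hw : IsVal w) (a : R) :
    w (-a) = w a := by
  have hm1 : w (-1 : R) + w (-1 : R) = 0 := by
    have h := hw.2.2.1 (-1 : R) (-1 : R)
    rw [neg_mul_neg, one_mul, hw.2.1] at h
    exact h.symm
  have h0 : w (-1 : R) = 0 := by
    rcases eq_or_ne (w (-1 : R)) ⊤ with h | h
    · rw [h] at hm1; simp at hm1
    · obtain ⟨x, hx⟩ := WithTop.ne_top_iff_exists.mp h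
      rw [← hx] at hm1 ⊢
      have hxx : x + x = 0 := by exact_mod_cast hm1
      have hx0 : x = 0 := by
        rcases lt_trichotomy x 0 with h1 | h1 | h1
        · have := add_lt_add h1 h1
          rw [hxx, add_zero] at this
          exact absurd this (lt_irrefl 0).elim
        · exact h1
        · have := add_lt_add h1 h1
          rw [hxx, zero_add] at this
          exact absurd this (lt_irrefl _).elim
      rw [hx0]; rfl
  calc w (-a) = w ((-1) * a) := by rw [neg_one_mul]
    _ = w (-1 : R) + w a := hw.2.2.1 _ _
    _ = w a := by rw [h0, zero_add]

/-- The valuation ring of a valuation `w` on a commutative ring. -/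
def valSubring {R : Type*} [CommRing R] (w : R → WithTop Λ) (hw : IsVal w) : Subring R where
  carrier := {a | 0 ≤ w a}
  zero_mem' := by show (0 : WithTop Λ) ≤ w 0; rw [hw.1]; exact le_top
  one_mem' := by show (0 : WithTop Λ) ≤ w 1; rw [hw.2.1]
  add_mem' := fun {a b} ha hb => le_trans (le_min ha hb) (hw.2.2.2 a b)
  mul_mem' := fun {a b} ha hb => by
    show (0 : WithTop Λ) ≤ w (a * b); rw [hw.2.2.1]; exact add_nonneg ha hb
  neg_mem' := fun {a} ha => by
    show (0 : WithTop Λ) ≤ w (-a); rw [hw.neg_eq]; exact ha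

/-- The maximal ideal of the valuation ring of `w`. -/
def valIdeal {R : Type*} [CommRing R] (w : R → WithTop Λ) (hw : IsVal w) :
    Ideal (valSubring w hw) where
  carrier := {a | 0 < w (a : R)}
  zero_mem' := by
    show (0 : WithTop Λ) < w ((0 : valSubring w hw) : R)
    rw [show ((0 : valSubring w hw) : R) = 0 from rfl, hw.1, ← WithTop.coe_zero]
    exact WithTop.coe_lt_top 0
  add_mem' := fun {a b} ha hb => lt_of_lt_of_le (lt_min ha hb) (hw.2.2.2 _ _)
  smul_mem' := fun c a ha => by
    show (0 : WithTop Λ) < w ((c * a : valSubring w hw) : R)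
    rw [show ((c * a : valSubring w hw) : R) = (c : R) * (a : R) from rfl, hw.2.2.1]
    exact lt_of_lt_of_le ha (le_add_of_nonneg_left c.2)

/-- The residue field (residue ring) of a valuation `w`. -/
def resField {R : Type*} [CommRing R] (w : R → WithTop Λ) (hw : IsVal w) : Type _ :=
  valSubring w hw ⧸ valIdeal w hw

noncomputable instance {R : Type*} [CommRing R] (w : R → WithTop Λ) (hw : IsVal w) :
    CommRing (resField w hw) :=
  inferInstanceAs (CommRing (valSubring w hw ⧸ valIdeal w hw))

/-- The map induced between residue fields by a ring homomorphism compatible with the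
valuations. -/
noncomputable def residueMap {R S : Type*} [CommRing R] [CommRing S]
    (v : R → WithTop Λ) (hv : IsVal v) (w : S → WithTop Λ) (hw : IsVal w)
    (ι : R →+* S) (hc : ∀ a : R, w (ι a) = v a) :
    resField v hv →+* resField w hw :=
  Ideal.Quotient.lift (valIdeal v hv)
    ((Ideal.Quotient.mk (valIdeal w hw)).comp
      (RingHom.codRestrict (ι.comp (valSubring v hv).subtype) (valSubring w hw)
        (fun x => by show (0 : WithTop Λ) ≤ w (ι (x : R)); rw [hc]; exact x.2)))
    (fun a ha => by
      show Ideal.Quotient.mk (valIdeal w hw) _ = 0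
      rw [Ideal.Quotient.eq_zero_iff_mem]
      show (0 : WithTop Λ) < w (ι (a : R))
      rw [hc]; exact ha)

/-- The transcendence degree of an algebra: the supremum of the cardinalities of
algebraically independent subsets. -/
noncomputable def trdeg' (R A : Type*) [CommRing R] [CommRing A] [Algebra R A] : Cardinal :=
  ⨆ s : {s : Set A // AlgebraicIndependent R ((↑) : s → A)}, Cardinal.mk s.1

end Abhyankar

/-!
Since every element of `L` is a quotient of elements of `K[π x]`, `trdeg(L/K) ≤ 1`, so it is
enough to prove the Abhyankar inequality `rr(Γ_w/Γ_v) + trdeg(k_w/k_v) ≤ trdeg(L/K)` for a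
valuation `w` on a field extension `L/K` extending `v`. For this, take `x_i ∈ L` whose values are
`ℤ`-independent modulo `Γ_v` and `y_j` in the valuation ring of `w` whose residues are
algebraically independent over `k_v`. After dividing by the coefficient of least value, a nonzero
polynomial in the `y_j` reduces to a nonzero polynomial over `k_v`, so its value is that of this
coefficient and lies in `Γ_v`. Hence in a polynomial relation among the `x_i` with coefficients in
`K[y]` distinct monomials have distinct values, and the relation cannot hold: the family `(x, y)`
is algebraically independent over `K`.
-/

universe u

namespace IsVal

variable {Λ : Type*} [AddCommGroup Λ] [LinearOrder Λ] [IsOrderedAddMonoid Λ]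

section CommRing

variable {R : Type*} [CommRing R] {w : R → WithTop Λ}

def toAddValuation (hw : IsVal w) : AddValuation R (WithTop Λ) :=
  AddValuation.of w hw.1 hw.2.1 hw.2.2.2 hw.2.2.1

theorem map_zero (hw : IsVal w) : w 0 = ⊤ := hw.toAddValuation.map_zero

theorem map_one (hw : IsVal w) : w 1 = 0 := hw.toAddValuation.map_one

theorem map_mul (hw : IsVal w) (a b : R) : w (a * b) = w a + w b :=
  hw.toAddValuation.map_mul a b

theorem map_pow (hw : IsVal w) (a : R) (n : ℕ) : w (a ^ n) = n • w a :=
  hw.toAddValuation.map_pow a n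

theorem map_prod (hw : IsVal w) {ι : Type*} (s : Finset ι) (f : ι → R) :
    w (∏ i ∈ s, f i) = ∑ i ∈ s, w (f i) := by
  classical
  induction s using Finset.induction_on with
  | empty => simpa using hw.map_one
  | insert i s hi ih => rw [Finset.prod_insert hi, Finset.sum_insert hi, hw.map_mul, ih]

theorem map_sum_eq_of_lt (hw : IsVal w) {ι : Type*} [DecidableEq ι] {s : Finset ι} {f : ι → R}
    {j : ι} (hj : j ∈ s) (hf : ∀ i ∈ s \ {j}, w (f j) < w (f i)) :
    w (∑ i ∈ s, f i) = w (f j) := by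
  rw [Finset.sum_eq_add_sum_sdiff_singleton_of_mem hj]
  rcases eq_or_ne (w (f j)) ⊤ with htop | htop
  · have hrest : ∑ i ∈ s \ {j}, f i = 0 := by
      refine Finset.sum_eq_zero fun i hi => ?_
      simpa [htop] using hf i hi
    rw [hrest, add_zero]
  · exact hw.toAddValuation.map_add_eq_of_lt_left (hw.toAddValuation.map_lt_sum htop hf)

variable (hw : IsVal w)

noncomputable def resHom : valSubring w hw →+* resField w hw := Ideal.Quotient.mk _

theorem resHom_surjective : Function.Surjective hw.resHom := Ideal.Quotient.mk_surjective

variable {hw} in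
theorem resHom_eq_zero_iff {a : valSubring w hw} : hw.resHom a = 0 ↔ 0 < w a :=
  Ideal.Quotient.eq_zero_iff_mem

theorem map_eq_zero_of_resHom_ne_zero {a : valSubring w hw} (ha : hw.resHom a ≠ 0) : w a = 0 :=
  le_antisymm (not_lt.mp (mt resHom_eq_zero_iff.mpr ha)) a.2

instance : Nontrivial (resField w hw) :=
  ⟨⟨1, 0, fun h => by
    simpa [hw.map_one] using resHom_eq_zero_iff.mp (show hw.resHom 1 = 0 from h)⟩⟩

end CommRing

section Field

variable {F : Type*} [Field F] {w : F → WithTop Λ}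

theorem eq_top_iff (hw : IsVal w) {a : F} : w a = ⊤ ↔ a = 0 := hw.toAddValuation.top_iff

theorem map_inv (hw : IsVal w) (a : F) : w a⁻¹ = -w a := hw.toAddValuation.map_inv

theorem exists_map_subtype_eq_inv_smul (hw : IsVal w) {κ : Type*} {p : MvPolynomial κ F} {c : F}
    (hc : c ≠ 0) (hmin : ∀ m ∈ p.support, w c ≤ w (p.coeff m)) :
    ∃ q : MvPolynomial κ (valSubring w hw), q.map (valSubring w hw).subtype = c⁻¹ • p := by
  rw [← Set.mem_range, MvPolynomial.mem_range_map_iff_coeffs_subset]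
  intro b hb
  obtain ⟨m, hm, rfl⟩ := MvPolynomial.mem_coeffs_iff.mp hb
  refine ⟨⟨_, ?_⟩, rfl⟩
  change 0 ≤ w ((c⁻¹ • p).coeff m)
  rw [MvPolynomial.coeff_smul, smul_eq_mul, hw.map_mul, hw.map_inv]
  have hc' : w c ≠ ⊤ := hw.eq_top_iff.not.mpr hc
  calc 0 = -w c + w c := (LinearOrderedAddCommGroupWithTop.neg_add_cancel_of_ne_top hc').symm
    _ ≤ -w c + w (p.coeff m) := add_le_add_right (hmin m (MvPolynomial.support_smul hm)) _

def valueGroup (hw : IsVal w) : AddSubgroup Λ where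
  carrier := {γ | ∃ a, w a = γ}
  zero_mem' := ⟨1, hw.map_one⟩
  add_mem' := by
    rintro _ _ ⟨a, ha⟩ ⟨b, hb⟩
    exact ⟨a * b, by rw [hw.map_mul, ha, hb, WithTop.coe_add]⟩
  neg_mem' := by
    rintro _ ⟨a, ha⟩
    exact ⟨a⁻¹, by rw [hw.map_inv, ha]; rfl⟩

theorem closure_eq_valueGroup (hw : IsVal w) :
    AddSubgroup.closure {γ : Λ | ∃ a, w a = γ} = hw.valueGroup :=
  AddSubgroup.closure_eq hw.valueGroup

theorem exists_mem_valueGroup (hw : IsVal w) {a : F} (ha : a ≠ 0) :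
    ∃ γ ∈ hw.valueGroup, w a = γ :=
  let ⟨γ, hγ⟩ := WithTop.ne_top_iff_exists.mp (hw.eq_top_iff.not.mpr ha)
  ⟨γ, ⟨a, hγ.symm⟩, hγ.symm⟩

theorem closure_eq_valueGroup_of_forall_mul_eq (hw : IsVal w) {A : Type*} [CommRing A]
    {μ : A → WithTop Λ} (π : A →+* F) (hgen : ∀ z : F, ∃ f g : A, π g ≠ 0 ∧ z * π g = π f)
    (hcomp : ∀ f : A, w (π f) = μ f) :
    AddSubgroup.closure {γ : Λ | ∃ f, μ f = γ} = hw.valueGroup := by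
  refine le_antisymm ((AddSubgroup.closure_le _).mpr ?_) ?_
  · rintro γ ⟨f, hf⟩
    exact ⟨π f, by rw [hcomp, hf]⟩
  · rintro γ ⟨z, hz⟩
    obtain ⟨f, g, hg, hzg⟩ := hgen z
    obtain ⟨β, -, hβ⟩ := hw.exists_mem_valueGroup hg
    have hf : μ f = ↑(γ + β) := by rw [← hcomp, ← hzg, hw.map_mul, hz, hβ, WithTop.coe_add]
    rw [← add_sub_cancel_right γ β]
    exact sub_mem (AddSubgroup.subset_closure ⟨f, hf⟩)
      (AddSubgroup.subset_closure ⟨g, by rw [← hcomp, hβ]⟩)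

end Field

end IsVal

section Residue

variable {Λ : Type*} [AddCommGroup Λ] [LinearOrder Λ] [IsOrderedAddMonoid Λ]
  {R S : Type*} [CommRing R] [CommRing S] {v : R → WithTop Λ} (hv : IsVal v)
  {w : S → WithTop Λ} (hw : IsVal w) (ι : R →+* S) (hι : ∀ a : R, w (ι a) = v a)

noncomputable def valSubringMap : valSubring v hv →+* valSubring w hw :=
  (ι.comp (valSubring v hv).subtype).codRestrict _ fun a => show 0 ≤ w (ι a) by rw [hι]; exact a.2

theorem residueMap_injective : Function.Injective (residueMap v hv w hw ι hι) := by
  rw [injective_iff_map_eq_zero]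
  intro x hx
  obtain ⟨a, rfl⟩ := hv.resHom_surjective x
  have : 0 < w (ι a) := IsVal.resHom_eq_zero_iff.mp hx
  exact IsVal.resHom_eq_zero_iff.mpr (by rwa [hι] at this)

end Residue

theorem QuotientAddGroup.map_addSubgroupOf_subtype_injective {G : Type*} [AddCommGroup G]
    (H N : AddSubgroup G) :
    Function.Injective (QuotientAddGroup.map (N.addSubgroupOf H) N H.subtype le_rfl) := by
  rw [injective_iff_map_eq_zero]
  rintro ⟨x⟩ hx
  exact (QuotientAddGroup.eq_zero_iff x).mpr
    (AddSubgroup.mem_addSubgroupOf.mpr ((QuotientAddGroup.eq_zero_iff _).mp hx))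

theorem LinearIndependent.injective_finsuppSum_nsmul {ι M : Type*} [AddCommGroup M] {q : ι → M}
    (hq : LinearIndependent ℤ q) :
    Function.Injective fun d : ι →₀ ℕ => d.sum fun i k => k • q i := by
  have : (fun d : ι →₀ ℕ => d.sum fun i k => k • q i) =
      Finsupp.linearCombination ℤ q ∘ Finsupp.mapRange (Nat.cast : ℕ → ℤ) Nat.cast_zero := by
    ext d
    simp [Finsupp.linearCombination_apply, Finsupp.sum_mapRange_index, natCast_zsmul]
  rw [this]
  exact Function.Injective.comp hq (Finsupp.mapRange_injective _ _ Nat.cast_injective)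

section Values

variable {Λ : Type*} [AddCommGroup Λ] [LinearOrder Λ] [IsOrderedAddMonoid Λ]
  {S : Type*} [CommRing S] {w : S → WithTop Λ}

theorem IsVal.algebraicIndependent_of_linearIndependent_values (hw : IsVal w)
    {R : Type*} [CommRing R] [Algebra R S] {Γ₀ : AddSubgroup Λ}
    (hR : ∀ r : R, r ≠ 0 → ∃ β ∈ Γ₀, w (algebraMap R S r) = β)
    {ι : Type*} {x : ι → S} {γ : ι → Λ} (hx : ∀ i, w (x i) = γ i)
    (hγ : LinearIndependent ℤ fun i => (γ i : Λ ⧸ Γ₀)) :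
    AlgebraicIndependent R x := by
  classical
  rw [algebraicIndependent_iff]
  intro P hP
  by_contra hP₀
  set T : (ι →₀ ℕ) → S := fun d => algebraMap R S (P.coeff d) * ∏ i ∈ d.support, x i ^ d i
  have hval : ∀ d ∈ P.support, ∃ β ∈ Γ₀, w (T d) = ↑(β + d.sum fun i k => k • γ i) := by
    intro d hd
    obtain ⟨β, hβ, hwβ⟩ := hR _ (MvPolynomial.mem_support_iff.mp hd)
    refine ⟨β, hβ, ?_⟩
    simp only [T, hw.map_mul, hw.map_prod, hw.map_pow, hx, hwβ, Finsupp.sum, WithTop.coe_add,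
      WithTop.coe_sum, WithTop.coe_nsmul]
  have hinj : Set.InjOn (w ∘ T) P.support := by
    intro d hd e he hde
    obtain ⟨β, hβ, hdβ⟩ := hval d hd
    obtain ⟨β', hβ', heβ'⟩ := hval e he
    have h : β + (d.sum fun i k => k • γ i) = β' + e.sum fun i k => k • γ i :=
      WithTop.coe_eq_coe.mp (by simpa only [Function.comp, hdβ, heβ'] using hde)
    apply hγ.injective_finsuppSum_nsmul
    have := congrArg (QuotientAddGroup.mk' Γ₀) h
    rw [map_add, map_add, map_finsuppSum, map_finsuppSum] at this
    simpa only [map_nsmul, QuotientAddGroup.mk'_apply, (QuotientAddGroup.eq_zero_iff _).mpr hβ,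
      (QuotientAddGroup.eq_zero_iff _).mpr hβ', zero_add] using this
  obtain ⟨d₀, hd₀, hmin⟩ :=
    P.support.exists_min_image (w ∘ T) (MvPolynomial.support_nonempty.mpr hP₀)
  have hlt : ∀ d ∈ P.support \ {d₀}, w (T d₀) < w (T d) := fun d hd => by
    rw [Finset.mem_sdiff, Finset.mem_singleton] at hd
    exact (hmin d hd.1).lt_of_ne fun h => hd.2 (hinj hd₀ hd.1 h).symm
  have hsum := hw.map_sum_eq_of_lt hd₀ hlt
  rw [← MvPolynomial.eval₂_eq, ← MvPolynomial.aeval_def, hP, hw.map_zero] at hsum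
  obtain ⟨β, -, hβ⟩ := hval d₀ hd₀
  exact WithTop.top_ne_coe (hsum.trans hβ)

end Values

section Extension

variable {Λ : Type*} [AddCommGroup Λ] [LinearOrder Λ] [IsOrderedAddMonoid Λ]
  {K L : Type*} [Field K] [Field L] [Algebra K L]
  {v : K → WithTop Λ} {w : L → WithTop Λ} {hv : IsVal v} {hw : IsVal w}
  {hvw : ∀ a : K, w (algebraMap K L a) = v a}
  [Algebra (resField v hv) (resField w hw)]

theorem exists_map_aeval_eq_map_coeff
    (hres : algebraMap (resField v hv) (resField w hw) =
      residueMap v hv w hw (algebraMap K L) hvw)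
    {κ : Type*} {y : κ → valSubring w hw}
    (hy : AlgebraicIndependent (resField v hv) (hw.resHom ∘ y))
    {p : MvPolynomial κ K} (hp : p ≠ 0) :
    ∃ m ∈ p.support, w (MvPolynomial.aeval (fun i => (y i : L)) p) = v (p.coeff m) := by
  classical
  obtain ⟨m₀, hm₀, hmin⟩ :=
    p.support.exists_min_image (fun m => v (p.coeff m)) (MvPolynomial.support_nonempty.mpr hp)
  refine ⟨m₀, hm₀, ?_⟩
  set c := p.coeff m₀
  have hc : c ≠ 0 := MvPolynomial.mem_support_iff.mp hm₀
  obtain ⟨q, hq⟩ := hv.exists_map_subtype_eq_inv_smul hc hmin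
  set U : valSubring w hw := MvPolynomial.eval₂ (valSubringMap hv hw (algebraMap K L) hvw) y q
  have hU : (U : L) = algebraMap K L c⁻¹ * MvPolynomial.aeval (fun i => (y i : L)) p := by
    change (valSubring w hw).subtype U = _
    rw [MvPolynomial.eval₂_comp_left, ← Algebra.smul_def, ← map_smul, ← hq,
      MvPolynomial.aeval_def, MvPolynomial.eval₂_map]
    rfl
  have hresU : hw.resHom U = MvPolynomial.aeval (hw.resHom ∘ y) (q.map hv.resHom) := by
    rw [MvPolynomial.eval₂_comp_left, MvPolynomial.aeval_def, MvPolynomial.eval₂_map, hres]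
    rfl
  have hq₀ : (q.map hv.resHom).coeff m₀ = 1 := by
    have : q.coeff m₀ = 1 := Subtype.ext <| by
      have h := congrArg (MvPolynomial.coeff m₀) hq
      rwa [MvPolynomial.coeff_map, MvPolynomial.coeff_smul, smul_eq_mul, inv_mul_cancel₀ hc] at h
    rw [MvPolynomial.coeff_map, this, map_one]
  have hU₀ : w U = 0 := hw.map_eq_zero_of_resHom_ne_zero fun h => by
    have : q.map hv.resHom = 0 := hy.eq_zero_of_aeval_eq_zero _ (hresU ▸ h)
    simp [this] at hq₀
  calc w (MvPolynomial.aeval (fun i => (y i : L)) p) = w (algebraMap K L c * U) := by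
        rw [hU, ← mul_assoc, ← map_mul, mul_inv_cancel₀ hc, map_one, one_mul]
    _ = v c := by rw [hw.map_mul, hvw, hU₀, add_zero]

theorem algebraicIndependent_of_residues
    (hres : algebraMap (resField v hv) (resField w hw) =
      residueMap v hv w hw (algebraMap K L) hvw)
    {κ : Type*} {y : κ → valSubring w hw}
    (hy : AlgebraicIndependent (resField v hv) (hw.resHom ∘ y)) :
    AlgebraicIndependent K fun i => (y i : L) := by
  rw [algebraicIndependent_iff]
  intro p hp
  by_contra hp₀
  obtain ⟨m, hm, hwm⟩ := exists_map_aeval_eq_map_coeff hres hy hp₀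
  rw [hp, hw.map_zero, eq_comm, hv.eq_top_iff] at hwm
  exact MvPolynomial.mem_support_iff.mp hm hwm

theorem algebraicIndependent_sumElim_of_values_of_residues
    (hres : algebraMap (resField v hv) (resField w hw) =
      residueMap v hv w hw (algebraMap K L) hvw)
    {ι : Type*} {x : ι → L} {γ : ι → Λ} (hx : ∀ i, w (x i) = γ i)
    (hγ : LinearIndependent ℤ fun i => (γ i : Λ ⧸ hv.valueGroup))
    {κ : Type*} {y : κ → valSubring w hw}
    (hy : AlgebraicIndependent (resField v hv) (hw.resHom ∘ y)) :
    AlgebraicIndependent K (Sum.elim x fun j => (y j : L)) := by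
  refine AlgebraicIndependent.sumElim_iff.mpr ⟨algebraicIndependent_of_residues hres hy, ?_⟩
  refine hw.algebraicIndependent_of_linearIndependent_values
    (R := Algebra.adjoin K (Set.range fun j => (y j : L))) (fun r hr => ?_) hx hγ
  obtain ⟨p, hp⟩ : (r : L) ∈ Set.range (MvPolynomial.aeval (R := K) fun i => (y i : L)) := by
    rw [← AlgHom.coe_range, ← Algebra.adjoin_range_eq_range_aeval]
    exact r.2
  have hp₀ : p ≠ 0 := by
    rintro rfl
    exact hr (Subtype.ext (by simpa using hp.symm))
  obtain ⟨m, hm, hwm⟩ := exists_map_aeval_eq_map_coeff hres hy hp₀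
  obtain ⟨β, hβ, hvβ⟩ := hv.exists_mem_valueGroup (MvPolynomial.mem_support_iff.mp hm)
  exact ⟨β, hβ, by rw [← hvβ, ← hwm, hp]; rfl⟩

end Extension

theorem rank_valueGroup_quotient_add_trdeg_le_trdeg {Λ : Type u} [AddCommGroup Λ] [LinearOrder Λ]
    [IsOrderedAddMonoid Λ] {K : Type*} {L : Type u} [Field K] [Field L] [Algebra K L]
    {v : K → WithTop Λ} {w : L → WithTop Λ} {hv : IsVal v} {hw : IsVal w}
    {hvw : ∀ a : K, w (algebraMap K L a) = v a} [Algebra (resField v hv) (resField w hw)]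
    (hres : algebraMap (resField v hv) (resField w hw) =
      residueMap v hv w hw (algebraMap K L) hvw) :
    Module.rank ℤ (hw.valueGroup ⧸ hv.valueGroup.addSubgroupOf hw.valueGroup) +
      Algebra.trdeg (resField v hv) (resField w hw) ≤ Algebra.trdeg K L := by
  have : FaithfulSMul (resField v hv) (resField w hw) :=
    (faithfulSMul_iff_algebraMap_injective _ _).mpr (hres ▸ residueMap_injective hv hw _ hvw)
  rw [Module.rank_def, Algebra.trdeg,
    Cardinal.ciSup_add_ciSup _ Cardinal.bddAbove_of_small _ Cardinal.bddAbove_of_small]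
  refine ciSup_le fun s => ciSup_le fun t => ?_
  choose γ hγ using fun q : s.1 => QuotientAddGroup.mk_surjective q.1
  choose x hx using fun q : s.1 => (γ q).2
  choose y hy using fun r : t.1 => hw.resHom_surjective r.1
  have hγind : LinearIndependent ℤ fun q => ((γ q : Λ) : Λ ⧸ hv.valueGroup) := by
    let f := (QuotientAddGroup.map (hv.valueGroup.addSubgroupOf hw.valueGroup) _
      hw.valueGroup.subtype le_rfl).toIntLinearMap
    have hf : (fun q => ((γ q : Λ) : Λ ⧸ hv.valueGroup)) = f ∘ fun q => id q.1 :=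
      funext fun q => by rw [Function.comp_apply, id, ← hγ q]; rfl
    rw [hf]
    exact s.2.map' f
      (LinearMap.ker_eq_bot.mpr (QuotientAddGroup.map_addSubgroupOf_subtype_injective _ _))
  have hyind : AlgebraicIndependent (resField v hv) (hw.resHom ∘ y) := by
    convert t.2 using 1
    exact funext hy
  have := (algebraicIndependent_sumElim_of_values_of_residues hres hx hγind hyind)
    |>.cardinalMk_le_trdeg
  rwa [Cardinal.mk_sum, Cardinal.lift_id, Cardinal.lift_id] at this

theorem Algebra.trdeg_le_one_of_forall_mul_eq {K L : Type*} [Field K] [Field L] [Algebra K L]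
    (π : K[X] →ₐ[K] L) (hgen : ∀ z : L, ∃ f g : K[X], π g ≠ 0 ∧ z * π g = π f) :
    Algebra.trdeg K L ≤ 1 := by
  have hadj (f : K[X]) : π f ∈ Algebra.adjoin K {π X} := by
    rw [← Polynomial.aeval_X_left_apply f, ← Polynomial.aeval_algHom_apply]
    exact Polynomial.aeval_mem_adjoin_singleton K (π X)
  have : Algebra.IsAlgebraic (Algebra.adjoin K {π X}) L := ⟨fun z => by
    obtain ⟨f, g, hg, hz⟩ := hgen z
    refine IsAlgebraic.of_mul (mem_nonZeroDivisors_of_ne_zero hg)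
      (isAlgebraic_algebraMap (⟨π g, hadj g⟩ : Algebra.adjoin K {π X})) ?_
    rw [mul_comm, hz]
    exact isAlgebraic_algebraMap (⟨π f, hadj f⟩ : Algebra.adjoin K {π X})⟩
  simpa using Algebra.IsAlgebraic.trdeg_le_cardinalMk K {π X}

section Abhyankar

open TensorProduct

/-- `L` is the fraction field of `K[x]/supp(μ)`, presented by `π`, and `μbar` is the valuation
induced by `μ` on it. -/
theorem abhyankar_inequality {K Λ' L : Type} [Field K] [Field L]
    [AddCommGroup Λ'] [LinearOrder Λ'] [IsOrderedAddMonoid Λ'] (v : K → WithTop Λ') (hv : IsVal v)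
    (μ : Polynomial K → WithTop Λ') (hext : ExtendsVal v μ)
    (π : Polynomial K →+* L)
    (hgen : ∀ z : L, ∃ f g : Polynomial K, π g ≠ 0 ∧ z * π g = π f)
    (μbar : L → WithTop Λ') (hμbar : IsVal μbar)
    (hcomp : ∀ f : Polynomial K, μbar (π f) = μ f) :
    Module.rank ℚ (ℚ ⊗[ℤ]
        ((AddSubgroup.closure {γ : Λ' | ∃ f : Polynomial K, μ f = (γ : WithTop Λ')}) ⧸
          ((AddSubgroup.closure {γ : Λ' | ∃ a : K, v a = (γ : WithTop Λ')}).addSubgroupOf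
            (AddSubgroup.closure {γ : Λ' | ∃ f : Polynomial K, μ f = (γ : WithTop Λ')})))) +
      @trdeg' (resField v hv) (resField μbar hμbar) _ _
        ((residueMap v hv μbar hμbar (π.comp (Polynomial.C : K →+* Polynomial K))
          (fun a => by rw [RingHom.comp_apply, hcomp, hext a])).toAlgebra) ≤ 1 := by
  let _ : Algebra K L := (π.comp C).toAlgebra
  have hvw (a : K) : μbar (algebraMap K L a) = v a := (hcomp _).trans (hext a)
  let _ : Algebra (resField v hv) (resField μbar hμbar) :=
    (residueMap v hv μbar hμbar (algebraMap K L) hvw).toAlgebra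
  rw [hμbar.closure_eq_valueGroup_of_forall_mul_eq π hgen hcomp, hv.closure_eq_valueGroup,
    (TensorProduct.isBaseChange ℤ _ ℚ).rank_eq]
  exact (rank_valueGroup_quotient_add_trdeg_le_trdeg rfl).trans
    (Algebra.trdeg_le_one_of_forall_mul_eq ⟨π, fun _ => rfl⟩ hgen)

end Abhyankar
end

section
/- Let μ, ν be valuations on K[x] extending v with μ ≤ ν (meaning μ(f) ≤ ν(f) for all f ∈ K[x]) and μ ≠ ν. Let φ be a monic polynomial of minimal degree among those satisfying μ(φ) < ν(φ). Then for every f ∈ K[x], if the initial term of φ in the graded algebra of μ does not divide the initial term of f, then μ(f) = ν(f). -/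
open Polynomial

/-!
Divide `f = r + φ q` with `deg r < deg φ`. By the minimality of `deg φ`, `μ` and `ν` agree on `r`.
If `μ (φ q) < μ r`, then `f ∼_μ φ q`, so `φ ∣_μ f`. Otherwise `μ r ≤ μ (φ q) < ν (φ q)`
because `μ φ < ν φ` (or `ν (φ q) = ⊤`), hence `ν f = ν r = μ r ≤ μ f ≤ ν f`.
-/

namespace IsVal

variable {Λ : Type*} [AddCommGroup Λ] [LinearOrder Λ] [IsOrderedAddMonoid Λ]
  {R : Type*} [CommRing R] {μ : R → WithTop Λ}

lemma map_neg_one (hμ : IsVal μ) : μ (-1) = 0 := by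
  have hsq : μ (-1) + μ (-1) = 0 := by rw [← hμ.2.2.1, neg_one_mul, neg_neg, hμ.2.1]
  lift μ (-1) to Λ using fun h ↦ by simp [h] at hsq with y
  rw [← two_nsmul] at hsq
  exact congrArg _ ((smul_eq_zero.mp (WithTop.coe_eq_zero.mp hsq)).resolve_left two_ne_zero)

lemma map_neg (hμ : IsVal μ) (a : R) : μ (-a) = μ a := by
  rw [← neg_one_mul, hμ.2.2.1, hμ.map_neg_one, zero_add]

lemma map_add_eq_left_of_lt (hμ : IsVal μ) {a b : R} (h : μ a < μ b) : μ (a + b) = μ a := by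
  refine le_antisymm ?_ (min_eq_left h.le ▸ hμ.2.2.2 a b)
  have hsub := hμ.2.2.2 (a + b) (-b)
  rw [add_neg_cancel_right, hμ.map_neg] at hsub
  exact (min_le_iff.mp hsub).resolve_right h.not_ge

lemma map_add_eq_left_of_eq_top (hμ : IsVal μ) {a b : R} (h : μ b = ⊤) : μ (a + b) = μ a := by
  refine le_antisymm ?_ (by simpa [h] using hμ.2.2.2 a b)
  simpa [h, hμ.map_neg] using hμ.2.2.2 (a + b) (-b)

lemma map_mul_lt_of_lt {ν : R → WithTop Λ} (hμ : IsVal μ) (hν : IsVal ν) {a b : R}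
    (ha : μ a < ν a) (hb : μ b ≤ ν b) (hνb : ν b ≠ ⊤) : μ (a * b) < ν (a * b) := by
  rw [hμ.2.2.1, hν.2.2.1]
  exact WithTop.add_lt_add_of_lt_of_le (ne_top_of_le_ne_top hνb hb) ha hb

end IsVal

section

variable {Λ : Type*} [AddCommGroup Λ] [LinearOrder Λ] {K : Type*} [Field K]

lemma muDvd_of_lt_map_sub [IsOrderedAddMonoid Λ] {μ : K[X] → WithTop Λ} (hμ : IsVal μ)
    {h c g : K[X]} (hlt : μ (h * c) < μ (g - h * c)) : MuDvd μ h g := by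
  refine ⟨c, Or.inl ⟨?_, ?_⟩⟩
  · rw [← hμ.map_add_eq_left_of_lt hlt, add_sub_cancel]
  · rwa [← neg_sub, hμ.map_neg]

lemma map_eq_of_degree_lt_of_minimal {v : K → WithTop Λ} {μ ν : K[X] → WithTop Λ}
    (hμ : IsVal μ) (hν : IsVal ν) (hμv : ExtendsVal v μ) (hνv : ExtendsVal v ν)
    (hle : ∀ f, μ f ≤ ν f) {φ : K[X]}
    (hφmin : ∀ g : K[X], g.Monic → μ g < ν g → φ.degree ≤ g.degree)
    {r : K[X]} (hr : r.degree < φ.degree) : μ r = ν r := by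
  rcases eq_or_ne r 0 with rfl | hr0
  · rw [hμ.1, hν.1]
  set g := r * C r.leadingCoeff⁻¹
  have hg : μ g = ν g := (hle g).eq_of_not_lt fun hlt ↦
    (hφmin g (monic_mul_leadingCoeff_inv hr0) hlt).not_gt (degree_mul_leadingCoeff_inv r hr0 ▸ hr)
  have hrg : r = g * C r.leadingCoeff := by
    rw [mul_assoc, ← C_mul, inv_mul_cancel₀ (leadingCoeff_ne_zero.mpr hr0), C_1, mul_one]
  rw [hrg, hμ.2.2.1, hν.2.2.1, hμv, hνv, hg]

end

theorem tangent_direction_stability_general {K : Type*} [Field K] {Λ : Type*}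
    [AddCommGroup Λ] [LinearOrder Λ] [IsOrderedAddMonoid Λ] (v : K → WithTop Λ)
    (μ ν : Polynomial K → WithTop Λ) (hμ : IsVal μ) (hν : IsVal ν)
    (hμv : ExtendsVal v μ) (hνv : ExtendsVal v ν)
    (hle : ∀ f : Polynomial K, μ f ≤ ν f)
    (φ : Polynomial K) (hφm : φ.Monic) (hφlt : μ φ < ν φ)
    (hφmin : ∀ g : Polynomial K, g.Monic → μ g < ν g → φ.degree ≤ g.degree) :
    ∀ f : Polynomial K, ¬ MuDvd μ φ f → μ f = ν f := by
  intro f hndvd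
  set q := f /ₘ φ
  set r := f %ₘ φ
  have hf : f = r + φ * q := (modByMonic_add_div f φ).symm
  have hr : μ r = ν r := map_eq_of_degree_lt_of_minimal hμ hν hμv hνv hle hφmin
    (degree_modByMonic_lt f hφm)
  have hr_le : μ r ≤ μ (φ * q) := not_lt.mp fun hlt ↦
    hndvd (muDvd_of_lt_map_sub hμ (by rwa [hf, add_sub_cancel_right]))
  have hνf : ν f = ν r := by
    rw [hf]
    rcases eq_or_ne (ν q) ⊤ with htop | hfin
    · exact hν.map_add_eq_left_of_eq_top (by rw [hν.2.2.1, htop, add_top])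
    · exact hν.map_add_eq_left_of_lt
        (hr ▸ hr_le.trans_lt (hμ.map_mul_lt_of_lt hν hφlt (hle q) hfin))
  have hμf : μ r ≤ μ f := hf ▸ (le_min le_rfl hr_le).trans (hμ.2.2.2 r (φ * q))
  exact le_antisymm (hle f) (hνf ▸ hr ▸ hμf)

/-- if `μ < ν` and `φ` is a monic polynomial of minimal degree with
`μ(φ) < ν(φ)`, then for every `f`, `φ ∤_μ f` implies `μ(f) = ν(f)`. -/
theorem tangent_direction_stability {K : Type*} [Field K] {Λ : Type*}
    [AddCommGroup Λ] [LinearOrder Λ] [IsOrderedAddMonoid Λ] (v : K → WithTop Λ) (hv : IsVal v)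
    (μ ν : Polynomial K → WithTop Λ) (hμ : IsVal μ) (hν : IsVal ν)
    (hμv : ExtendsVal v μ) (hνv : ExtendsVal v ν)
    (hle : ∀ f : Polynomial K, μ f ≤ ν f) (hne : μ ≠ ν)
    (φ : Polynomial K) (hφm : φ.Monic) (hφlt : μ φ < ν φ)
    (hφmin : ∀ g : Polynomial K, g.Monic → μ g < ν g → φ.degree ≤ g.degree) :
    ∀ f : Polynomial K, ¬ MuDvd μ φ f → μ f = ν f :=
  tangent_direction_stability_general v μ ν hμ hν hμv hνv hle φ hφm hφlt hφmin
end

section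
/- Every key polynomial φ of a valuation μ on K[x] extending v is irreducible in K[x]. -/
open Polynomial

/-!
If `φ = a * b`, then `φ ∣_μ a * b`, so by `μ`-irreducibility `φ ∣_μ a`, say; `μ`-minimality then
gives `deg a ≥ deg φ = deg a + deg b`, so `b` is a nonzero constant. A monic unit is `1`, and
`φ = 1` would give `φ ∣_μ 1`.
-/

theorem Polynomial.isUnit_of_degree_mul_le {K : Type*} [Field K] {a b : K[X]} (hab : a * b ≠ 0)
    (h : (a * b).degree ≤ a.degree) : IsUnit b := by
  have ha := left_ne_zero_of_mul hab
  have hb := right_ne_zero_of_mul hab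
  rw [degree_eq_natDegree hab, degree_eq_natDegree ha, natDegree_mul ha hb, Nat.cast_le] at h
  rw [isUnit_iff_degree_eq_zero, degree_eq_natDegree hb]
  norm_cast
  omega

section

variable {K : Type*} [Field K] {Λ : Type*} [LinearOrder Λ] {μ : K[X] → WithTop Λ}

theorem muEquiv_refl (h0 : μ 0 = ⊤) (a : K[X]) : MuEquiv μ a a := by
  by_cases ha : μ a = ⊤
  · exact Or.inr ⟨ha, ha⟩
  · exact Or.inl ⟨rfl, by rwa [sub_self, h0, lt_top_iff_ne_top]⟩

theorem muDvd_self (h0 : μ 0 = ⊤) (g : K[X]) : MuDvd μ g g :=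
  ⟨1, by simpa only [mul_one] using muEquiv_refl h0 g⟩

theorem MuMinimal.isUnit_right_of_muDvd {g a b : K[X]} (hmin : MuMinimal μ g) (hg : g ≠ 0)
    (hab : g = a * b) (hdvd : MuDvd μ g a) : IsUnit b := by
  subst hab
  exact isUnit_of_degree_mul_le hg
    (not_lt.mp fun hlt => hmin a (left_ne_zero_of_mul hg) hlt hdvd)

end

theorem keyPol_irreducible_general {K : Type*} [Field K] {Λ : Type*}
    [AddCommGroup Λ] [LinearOrder Λ] [IsOrderedAddMonoid Λ]
    (μ : Polynomial K → WithTop Λ) (hμ : IsVal μ)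
    (φ : Polynomial K) (hφ : IsKeyPol μ φ) : Irreducible φ := by
  obtain ⟨hmonic, hmin, -, hndvd_one, hprime⟩ := hφ
  have h0 : μ 0 = ⊤ := hμ.1
  refine ⟨fun hu => hndvd_one ?_, fun a b hab => ?_⟩
  · simpa only [hmonic.isUnit_iff.mp hu] using muDvd_self h0 (1 : K[X])
  · rcases hprime a b (hab ▸ muDvd_self h0 φ) with ha | hb
    · exact Or.inr (hmin.isUnit_right_of_muDvd hmonic.ne_zero hab ha)
    · exact Or.inl (hmin.isUnit_right_of_muDvd hmonic.ne_zero (hab.trans (mul_comm a b)) hb)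

/-- every key polynomial of a valuation `μ` on `K[x]` extending `v`
is irreducible in `K[x]`. -/
theorem keyPol_irreducible {K : Type*} [Field K] {Λ : Type*}
    [AddCommGroup Λ] [LinearOrder Λ] [IsOrderedAddMonoid Λ] (v : K → WithTop Λ) (hv : IsVal v)
    (μ : Polynomial K → WithTop Λ) (hμ : IsVal μ) (hext : ExtendsVal v μ)
    (φ : Polynomial K) (hφ : IsKeyPol μ φ) : Irreducible φ :=
  keyPol_irreducible_general μ hμ φ hφ
end

section
/- Let (K,v) be a henselian valued field, F ∈ K[x] monic irreducible of degree n, θ a root of F. Suppose the set W = { v(g(θ))/deg(g) : g ∈ K[x] monic, 0 < deg(g) < n } has a maximal element, and let φ be a monic polynomial of minimal degree among those attaining v(φ(θ))/deg(φ) = max(W). Then φ is irreducible in K[x]. -/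
open Polynomial

section Aux

variable {Λ : Type*} [AddCommGroup Λ] [LinearOrder Λ] [IsOrderedAddMonoid Λ]

lemma myval_ne_top {L : Type*} [Field L] {w : L → WithTop Λ} (hw : IsVal w)
    {a : L} (ha : a ≠ 0) : w a ≠ ⊤ := by
  intro h
  have h1 := hw.2.2.1 a a⁻¹
  rw [mul_inv_cancel₀ ha, hw.2.1, h, top_add] at h1
  exact (WithTop.top_ne_zero) h1.symm

lemma mycoe_nsmul (n : ℕ) (x : Λ) : n • (↑x : WithTop Λ) = ↑(n • x) := by
  induction n with
  | zero => simp
  | succ n ih => rw [succ_nsmul, succ_nsmul, ih, WithTop.coe_add]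

lemma myeq_of_sum {a b c : Λ} {m n : ℕ} (h1 : (m + n) • a ≤ m • c) (h2 : (m + n) • b ≤ n • c)
    (hc : c = a + b) : (m + n) • a = m • c := by
  by_contra hne
  have hlt : (m + n) • a < m • c := lt_of_le_of_ne h1 hne
  have h3 := add_lt_add_of_lt_of_le hlt h2
  rw [← smul_add, ← hc, ← add_smul] at h3
  exact lt_irrefl _ h3

end Aux


/-- if the set `W = { v(g(θ))/deg g }` (over monic `g`, `0 < deg g < n`) has a
maximal element and `φ` is of minimal degree among the monic polynomials attaining it, then
`φ` is irreducible (weighted inequalities are stated by cross-multiplication). -/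
theorem optimal_approx_irreducible {K : Type*} [Field K] {Λ : Type*}
    [AddCommGroup Λ] [LinearOrder Λ] [IsOrderedAddMonoid Λ] (v : K → WithTop Λ) (hv : IsVal v)
    (vbar : AlgebraicClosure K → WithTop Λ) (hvbar : IsVal vbar)
    (hextbar : ∀ a : K, vbar (algebraMap K (AlgebraicClosure K) a) = v a)
    (hhens : ∀ w : AlgebraicClosure K → WithTop Λ, IsVal w →
      (∀ a : K, w (algebraMap K (AlgebraicClosure K) a) = v a) → w = vbar)
    (F : Polynomial K) (hFm : F.Monic) (hFirr : Irreducible F)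
    (θ : AlgebraicClosure K) (hθ : Polynomial.aeval θ F = 0)
    (φ : Polynomial K) (hφm : φ.Monic) (hφdeg : 0 < φ.natDegree)
    (hφlt : φ.natDegree < F.natDegree)
    (hmax : ∀ g : Polynomial K, g.Monic → 0 < g.natDegree → g.natDegree < F.natDegree →
      φ.natDegree • vbar (Polynomial.aeval θ g) ≤ g.natDegree • vbar (Polynomial.aeval θ φ))
    (hmindeg : ∀ ψ : Polynomial K, ψ.Monic → 0 < ψ.natDegree → ψ.natDegree < F.natDegree →
      (∀ g : Polynomial K, g.Monic → 0 < g.natDegree → g.natDegree < F.natDegree →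
        ψ.natDegree • vbar (Polynomial.aeval θ g) ≤
          g.natDegree • vbar (Polynomial.aeval θ ψ)) →
      φ.natDegree ≤ ψ.natDegree) :
    Irreducible φ := by
  constructor
  · intro hu
    have := Polynomial.natDegree_eq_zero_of_isUnit hu
    omega
  intro a b hab
  by_contra hcon
  push_neg at hcon
  obtain ⟨hau, hbu⟩ := hcon
  have hφ0 : φ ≠ 0 := hφm.ne_zero
  have ha0 : a ≠ 0 := by rintro rfl; exact hφ0 (by simpa using hab)
  have hb0 : b ≠ 0 := by rintro rfl; exact hφ0 (by simpa using hab)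
  -- minimal polynomial facts
  have hFmin : minpoly K θ = F := (minpoly.eq_of_irreducible_of_monic hFirr hθ hFm).symm
  have hroot : ∀ f : Polynomial K, f ≠ 0 → f.natDegree < F.natDegree →
      Polynomial.aeval θ f ≠ 0 := by
    intro f hf hdeg h0
    have hd : (minpoly K θ).natDegree ≤ f.natDegree :=
      Polynomial.natDegree_le_of_dvd (minpoly.dvd K θ h0) hf
    rw [hFmin] at hd; omega
  -- normalize the factors to monic polynomials
  set g := a * C a.leadingCoeff⁻¹ with hgdef
  set h := b * C b.leadingCoeff⁻¹ with hhdef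
  have hg : g.Monic := monic_mul_leadingCoeff_inv ha0
  have hh : h.Monic := monic_mul_leadingCoeff_inv hb0
  have hlc : a.leadingCoeff * b.leadingCoeff = 1 := by
    have := hφm.leadingCoeff
    rw [hab, leadingCoeff_mul] at this
    exact this
  have hgh : g * h = φ := by
    have hinv : a.leadingCoeff⁻¹ * b.leadingCoeff⁻¹ = 1 := by
      rw [← mul_inv]; rw [hlc]; simp
    calc g * h = a * b * (C a.leadingCoeff⁻¹ * C b.leadingCoeff⁻¹) := by ring
    _ = φ * C (a.leadingCoeff⁻¹ * b.leadingCoeff⁻¹) := by rw [← hab, ← C_mul]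
    _ = φ := by rw [hinv, map_one, mul_one]
  have hga : g.natDegree = a.natDegree :=
    natDegree_mul_C (inv_ne_zero (leadingCoeff_ne_zero.mpr ha0))
  have hhb : h.natDegree = b.natDegree :=
    natDegree_mul_C (inv_ne_zero (leadingCoeff_ne_zero.mpr hb0))
  have hgpos : 0 < g.natDegree := by
    rcases Nat.eq_zero_or_pos g.natDegree with h0 | h0
    · exfalso
      have h0a : a.natDegree = 0 := by omega
      have haC := Polynomial.eq_C_of_natDegree_eq_zero h0a
      apply hau
      rw [haC]
      refine isUnit_C.mpr (isUnit_iff_ne_zero.mpr fun hc => ha0 ?_)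
      rw [haC, hc, map_zero]
    · exact h0
  have hhpos : 0 < h.natDegree := by
    rcases Nat.eq_zero_or_pos h.natDegree with h0 | h0
    · exfalso
      have h0b : b.natDegree = 0 := by omega
      have hbC := Polynomial.eq_C_of_natDegree_eq_zero h0b
      apply hbu
      rw [hbC]
      refine isUnit_C.mpr (isUnit_iff_ne_zero.mpr fun hc => hb0 ?_)
      rw [hbC, hc, map_zero]
    · exact h0
  have hsum : g.natDegree + h.natDegree = φ.natDegree := by
    rw [← hgh, hg.natDegree_mul hh]
  have hglt : g.natDegree < φ.natDegree := by omega
  -- values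
  have hgθ : Polynomial.aeval θ g ≠ 0 := hroot g hg.ne_zero (by omega)
  have hhθ : Polynomial.aeval θ h ≠ 0 := hroot h hh.ne_zero (by omega)
  have hφθ : Polynomial.aeval θ φ ≠ 0 := hroot φ hφ0 hφlt
  obtain ⟨a', ha'⟩ := WithTop.ne_top_iff_exists.mp (myval_ne_top hvbar hgθ)
  obtain ⟨b', hb'⟩ := WithTop.ne_top_iff_exists.mp (myval_ne_top hvbar hhθ)
  obtain ⟨c', hc'⟩ := WithTop.ne_top_iff_exists.mp (myval_ne_top hvbar hφθ)
  have hmul : (c' : WithTop Λ) = ↑a' + ↑b' := by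
    rw [ha', hb', hc', ← hvbar.2.2.1, ← map_mul, hgh]
  rw [← WithTop.coe_add, WithTop.coe_inj] at hmul
  -- the two cross-multiplied inequalities
  have h1 := hmax g hg hgpos (by omega)
  have h2 := hmax h hh hhpos (by omega)
  rw [← ha', ← hc', mycoe_nsmul, mycoe_nsmul, WithTop.coe_le_coe] at h1
  rw [← hb', ← hc', mycoe_nsmul, mycoe_nsmul, WithTop.coe_le_coe] at h2
  rw [← hsum] at h1 h2
  have hkey : (g.natDegree + h.natDegree) • a' = g.natDegree • c' := myeq_of_sum h1 h2 hmul
  rw [hsum] at hkey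
  -- g also attains the maximum
  have hgmax : ∀ f : Polynomial K, f.Monic → 0 < f.natDegree → f.natDegree < F.natDegree →
      g.natDegree • vbar (Polynomial.aeval θ f) ≤
        f.natDegree • vbar (Polynomial.aeval θ g) := by
    intro f hfm hfpos hflt
    obtain ⟨f', hf'⟩ := WithTop.ne_top_iff_exists.mp
      (myval_ne_top hvbar (hroot f hfm.ne_zero hflt))
    have h3 := hmax f hfm hfpos hflt
    rw [← hf', ← hc', mycoe_nsmul, mycoe_nsmul, WithTop.coe_le_coe] at h3
    rw [← hf', ← ha', mycoe_nsmul, mycoe_nsmul, WithTop.coe_le_coe]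
    have h4 : φ.natDegree • (g.natDegree • f') ≤ φ.natDegree • (f.natDegree • a') := by
      calc φ.natDegree • (g.natDegree • f') = g.natDegree • (φ.natDegree • f') :=
            smul_comm _ _ _
      _ ≤ g.natDegree • (f.natDegree • c') := nsmul_le_nsmul_right h3 _
      _ = f.natDegree • (g.natDegree • c') := smul_comm _ _ _
      _ = f.natDegree • (φ.natDegree • a') := by rw [hkey]
      _ = φ.natDegree • (f.natDegree • a') := smul_comm _ _ _
    exact le_of_nsmul_le_nsmul_right hφdeg.ne' h4
  have := hmindeg g hg hgpos (by omega) hgmax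
  omega
end

section
/- Let (K,v) be a henselian valued field, F ∈ K[x] monic irreducible of degree n, and [Φ_0, Φ_1, …, Φ_r] an Okutsu frame of F with degrees m_0 = 1 < m_1 < ⋯ < m_r < m_{r+1} = n. For 0 ≤ ℓ ≤ r, let V_{m_ℓ} = { v_F(f) : f ∈ K[x] monic of degree m_ℓ } and W_{m_{ℓ+1}} = { v_F(g)/deg(g) : g monic, 0 < deg(g) < m_{ℓ+1} }. Then W_{m_{ℓ+1}} has a maximal element if and only if V_{m_ℓ} has a maximal element. -/
open Polynomial

/-!
If `Φ_ℓ = {φ}`, then applying the fundamental property to a monic `f` of degree `m_ℓ` gives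
`v_F(f) ≤ v_F(φ)`, so `φ` is a maximum of `V_{m_ℓ}`. Conversely, if `f₀` is a maximum of `V_{m_ℓ}`,
the fundamental property bounds `v_F(g)/deg g` by `v_F(φ)/m_ℓ ≤ v_F(f₀)/m_ℓ` for some `φ ∈ Φ_ℓ`,
so `f₀` is a maximum of `W_{m_{ℓ+1}}`.
-/

namespace WithTop

theorem nsmul_top_of_pos {α : Type*} [AddMonoid α] {n : ℕ} (hn : 0 < n) :
    n • (⊤ : WithTop α) = ⊤ := by
  obtain ⟨k, rfl⟩ := Nat.exists_eq_succ_of_ne_zero hn.ne'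
  rw [succ_nsmul, add_top]

theorem le_of_nsmul_le_nsmul {α : Type*} [AddCommMonoid α] [LinearOrder α]
    [IsOrderedCancelAddMonoid α] {n : ℕ} (hn : 0 < n) {a b : WithTop α} (h : n • a ≤ n • b) :
    a ≤ b := by
  induction b with
  | top => exact le_top
  | coe b =>
    induction a with
    | top =>
      rw [nsmul_top_of_pos hn, ← coe_nsmul, top_le_iff] at h
      exact absurd h coe_ne_top
    | coe a =>
      rw [← coe_nsmul, ← coe_nsmul, coe_le_coe] at h
      exact coe_le_coe.mpr (le_of_nsmul_le_nsmul_right hn.ne' h)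

end WithTop

section OkutsuLayer

variable {R : Type*} [Semiring R] {Λ : Type*} [AddCommMonoid Λ] [LinearOrder Λ]
  [IsOrderedCancelAddMonoid Λ] (w : R[X] → WithTop Λ) (Φ : Set R[X]) (d d' : ℕ)

/-- The fundamental property of the layer `Φ = Φ_ℓ` of an Okutsu frame, with `w = v_F`,
`d = m_ℓ` and `d' = m_{ℓ+1}`. -/
def FundamentalProperty : Prop :=
  ∀ g : R[X], g.Monic → 0 < g.natDegree → g.natDegree < d' →
    ∃ φ ∈ Φ, d • w g ≤ g.natDegree • w φ

/-- `W_{d'}` has a maximal element, the quotients `w g / deg g` being compared by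
cross-multiplication. -/
def HasMaxWeightedValue : Prop :=
  ∃ g₀ : R[X], g₀.Monic ∧ 0 < g₀.natDegree ∧ g₀.natDegree < d' ∧
    ∀ g : R[X], g.Monic → 0 < g.natDegree → g.natDegree < d' →
      g₀.natDegree • w g ≤ g.natDegree • w g₀

/-- `V_d` has a maximal element. -/
def HasMaxValue : Prop :=
  ∃ f₀ : R[X], f₀.Monic ∧ f₀.natDegree = d ∧
    ∀ f : R[X], f.Monic → f.natDegree = d → w f ≤ w f₀

variable {w Φ d d'}

theorem FundamentalProperty.hasMaxValue_of_eq_singleton {φ : R[X]}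
    (hfund : FundamentalProperty w Φ d d') (hΦ : Φ = {φ}) (hφ : φ.Monic ∧ φ.natDegree = d)
    (hd : 0 < d) (hdd' : d < d') : HasMaxValue w d := by
  refine ⟨φ, hφ.1, hφ.2, fun f hf hfd => ?_⟩
  obtain ⟨ψ, hψ, hle⟩ := hfund f hf (hfd ▸ hd) (hfd ▸ hdd')
  rw [hΦ, Set.mem_singleton_iff] at hψ
  rw [hψ, hfd] at hle
  exact WithTop.le_of_nsmul_le_nsmul hd hle

theorem FundamentalProperty.hasMaxWeightedValue_of_hasMaxValue
    (hfund : FundamentalProperty w Φ d d') (hpol : ∀ φ ∈ Φ, φ.Monic ∧ φ.natDegree = d)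
    (hd : 0 < d) (hdd' : d < d') (hV : HasMaxValue w d) : HasMaxWeightedValue w d' := by
  obtain ⟨f₀, hf₀, hf₀d, hmax⟩ := hV
  refine ⟨f₀, hf₀, hf₀d ▸ hd, hf₀d ▸ hdd', fun g hg hg0 hgd' => ?_⟩
  obtain ⟨φ, hφ, hle⟩ := hfund g hg hg0 hgd'
  calc f₀.natDegree • w g = d • w g := by rw [hf₀d]
    _ ≤ g.natDegree • w φ := hle
    _ ≤ g.natDegree • w f₀ := nsmul_le_nsmul_right (hmax φ (hpol φ hφ).1 (hpol φ hφ).2) _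

theorem FundamentalProperty.hasMaxWeightedValue_iff_hasMaxValue
    (hfund : FundamentalProperty w Φ d d') (hpol : ∀ φ ∈ Φ, φ.Monic ∧ φ.natDegree = d)
    (hd : 0 < d) (hdd' : d < d') (hsing : HasMaxWeightedValue w d' → ∃ φ, Φ = {φ}) :
    HasMaxWeightedValue w d' ↔ HasMaxValue w d := by
  refine ⟨fun hW => ?_, hfund.hasMaxWeightedValue_of_hasMaxValue hpol hd hdd'⟩
  obtain ⟨φ, hΦ⟩ := hsing hW
  exact hfund.hasMaxValue_of_eq_singleton hΦ (hpol φ (hΦ ▸ rfl)) hd hdd'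

end OkutsuLayer

theorem pos_of_pos_of_lt_succ {m : ℕ → ℕ} {r : ℕ} (hm0 : 0 < m 0)
    (hmono : ∀ ℓ, ℓ ≤ r → m ℓ < m (ℓ + 1)) : ∀ ℓ, ℓ ≤ r → 0 < m ℓ
  | 0, _ => hm0
  | ℓ + 1, hℓ => (pos_of_pos_of_lt_succ hm0 hmono ℓ (by omega)).trans (hmono ℓ (by omega))

theorem okutsu_frame_maxmax_general {K : Type*} [Field K] {Λ : Type*} [AddCommGroup Λ] [LinearOrder Λ] [IsOrderedAddMonoid Λ]
    (vbar : AlgebraicClosure K → WithTop Λ)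
    (θ : AlgebraicClosure K)
    (r : ℕ) (Φ : ℕ → Set (Polynomial K)) (m : ℕ → ℕ)
    (hm0 : m 0 = 1)
    (hmono : ∀ ℓ, ℓ ≤ r → m ℓ < m (ℓ + 1))
    (hpol : ∀ ℓ, ℓ ≤ r → ∀ φ ∈ Φ ℓ, φ.Monic ∧ Irreducible φ ∧ φ.natDegree = m ℓ)
    -- the fundamental property of Okutsu frames:
    (hfund : ∀ ℓ, ℓ ≤ r → ∀ g : Polynomial K, g.Monic → 0 < g.natDegree →
      g.natDegree < m (ℓ + 1) → ∃ φ ∈ Φ ℓ,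
        m ℓ • vbar (Polynomial.aeval θ g) ≤ g.natDegree • vbar (Polynomial.aeval θ φ))
    -- `Φ_ℓ` is a singleton whenever `W_{m_{ℓ+1}}` has a maximal element:
    (hsing : ∀ ℓ, ℓ ≤ r →
      (∃ g₀ : Polynomial K, g₀.Monic ∧ 0 < g₀.natDegree ∧ g₀.natDegree < m (ℓ + 1) ∧
        ∀ g : Polynomial K, g.Monic → 0 < g.natDegree → g.natDegree < m (ℓ + 1) →
          g₀.natDegree • vbar (Polynomial.aeval θ g) ≤
            g.natDegree • vbar (Polynomial.aeval θ g₀)) →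
      ∃ φ : Polynomial K, Φ ℓ = {φ}) :
    ∀ ℓ, ℓ ≤ r →
      ((∃ g₀ : Polynomial K, g₀.Monic ∧ 0 < g₀.natDegree ∧ g₀.natDegree < m (ℓ + 1) ∧
          ∀ g : Polynomial K, g.Monic → 0 < g.natDegree → g.natDegree < m (ℓ + 1) →
            g₀.natDegree • vbar (Polynomial.aeval θ g) ≤
              g.natDegree • vbar (Polynomial.aeval θ g₀)) ↔
        (∃ f₀ : Polynomial K, f₀.Monic ∧ f₀.natDegree = m ℓ ∧
          ∀ f : Polynomial K, f.Monic → f.natDegree = m ℓ →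
            vbar (Polynomial.aeval θ f) ≤ vbar (Polynomial.aeval θ f₀))) := by
  intro ℓ hℓ
  exact FundamentalProperty.hasMaxWeightedValue_iff_hasMaxValue (hfund ℓ hℓ)
    (fun φ hφ => ⟨(hpol ℓ hℓ φ hφ).1, (hpol ℓ hℓ φ hφ).2.2⟩)
    (pos_of_pos_of_lt_succ (by omega) hmono ℓ hℓ) (hmono ℓ hℓ) (hsing ℓ hℓ)

/-- let `[Φ_0, …, Φ_r]` be an Okutsu frame of a monic irreducible `F` of
degree `n` over a henselian field (with degrees `1 = m_0 < m_1 < ⋯ < m_{r+1} = n`).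
Then, for `0 ≤ ℓ ≤ r`, the set `W_{m_{ℓ+1}} = { v_F(g)/deg g : g monic, 0 < deg g < m_{ℓ+1}}`
has a maximal element iff `V_{m_ℓ} = { v_F(f) : f monic of degree m_ℓ }` has a maximal
element (weighted inequalities are stated by cross-multiplication). -/
theorem okutsu_frame_maxmax {K : Type*} [Field K] {Λ : Type*} [AddCommGroup Λ] [LinearOrder Λ] [IsOrderedAddMonoid Λ]
    (v : K → WithTop Λ) (hv : IsVal v)
    (vbar : AlgebraicClosure K → WithTop Λ) (hvbar : IsVal vbar)
    (hextbar : ∀ a : K, vbar (algebraMap K (AlgebraicClosure K) a) = v a)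
    (hhens : ∀ w : AlgebraicClosure K → WithTop Λ, IsVal w →
      (∀ a : K, w (algebraMap K (AlgebraicClosure K) a) = v a) → w = vbar)
    (F : Polynomial K) (hFm : F.Monic) (hFirr : Irreducible F)
    (θ : AlgebraicClosure K) (hθ : Polynomial.aeval θ F = 0)
    (r : ℕ) (Φ : ℕ → Set (Polynomial K)) (m : ℕ → ℕ)
    (hm0 : m 0 = 1) (hmlast : m (r + 1) = F.natDegree)
    (hmono : ∀ ℓ, ℓ ≤ r → m ℓ < m (ℓ + 1))
    (hne : ∀ ℓ, ℓ ≤ r → (Φ ℓ).Nonempty)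
    (hpol : ∀ ℓ, ℓ ≤ r → ∀ φ ∈ Φ ℓ, φ.Monic ∧ Irreducible φ ∧ φ.natDegree = m ℓ)
    -- the fundamental property of Okutsu frames:
    (hfund : ∀ ℓ, ℓ ≤ r → ∀ g : Polynomial K, g.Monic → 0 < g.natDegree →
      g.natDegree < m (ℓ + 1) → ∃ φ ∈ Φ ℓ,
        m ℓ • vbar (Polynomial.aeval θ g) ≤ g.natDegree • vbar (Polynomial.aeval θ φ))
    -- `Φ_ℓ` is a singleton whenever `W_{m_{ℓ+1}}` has a maximal element:
    (hsing : ∀ ℓ, ℓ ≤ r →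
      (∃ g₀ : Polynomial K, g₀.Monic ∧ 0 < g₀.natDegree ∧ g₀.natDegree < m (ℓ + 1) ∧
        ∀ g : Polynomial K, g.Monic → 0 < g.natDegree → g.natDegree < m (ℓ + 1) →
          g₀.natDegree • vbar (Polynomial.aeval θ g) ≤
            g.natDegree • vbar (Polynomial.aeval θ g₀)) →
      ∃ φ : Polynomial K, Φ ℓ = {φ}) :
    ∀ ℓ, ℓ ≤ r →
      ((∃ g₀ : Polynomial K, g₀.Monic ∧ 0 < g₀.natDegree ∧ g₀.natDegree < m (ℓ + 1) ∧
          ∀ g : Polynomial K, g.Monic → 0 < g.natDegree → g.natDegree < m (ℓ + 1) →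
            g₀.natDegree • vbar (Polynomial.aeval θ g) ≤
              g.natDegree • vbar (Polynomial.aeval θ g₀)) ↔
        (∃ f₀ : Polynomial K, f₀.Monic ∧ f₀.natDegree = m ℓ ∧
          ∀ f : Polynomial K, f.Monic → f.natDegree = m ℓ →
            vbar (Polynomial.aeval θ f) ≤ vbar (Polynomial.aeval θ f₀))) :=
  okutsu_frame_maxmax_general vbar θ r Φ m hm0 hmono hpol hfund hsing
end

section
/- Let (K,v) be a valued field and let ω_{a,δ} denote the depth-zero valuation on K[x] given on (x−a)-expansions by ω_{a,δ}(∑ a_s (x−a)^s) = min_s (v(a_s) + sδ). Then for a, b ∈ K and δ, ε in the value group (with ∞ allowed), ω_{a,δ} ≤ ω_{b,ε} (pointwise on K[x]) if and only if δ ≤ min(v(b−a), ε). -/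
open Polynomial

/-- The depth-zero valuation `ω_{a,δ}`, acting on `(x - a)`-expansions by
`ω_{a,δ}(∑ a_s (x-a)^s) = min_s (v(a_s) + s δ)`. -/
noncomputable def depthZeroVal {K : Type*} [Field K] {Λ : Type*}
    [AddCommGroup Λ] [LinearOrder Λ] [IsOrderedAddMonoid Λ] (v : K → WithTop Λ) (a : K) (δ : WithTop Λ)
    (f : Polynomial K) : WithTop Λ :=
  (Finset.range (f.natDegree + 1)).inf fun s => v ((Polynomial.taylor a f).coeff s) + s • δ

/-!
Evaluating both valuations at `x - a` gives `δ ≤ min (v (b - a)) ε`, since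
`ω_{b,ε}(x - a) = min (v (b - a)) ε`. Conversely, if `f = ∑ a_j (x - a)^j`, recentring at `b`
gives the `t`-th coefficient `∑_i C(i + t, t) a_{i+t} (b - a)^i`; every term has value at least
`v(a_{i+t}) + i δ` because binomial coefficients have nonnegative value, and `t ε ≥ t δ` then
bounds `v(coeff_t) + t ε` below by `ω_{a,δ}(f)`.
-/

namespace IsVal

variable {Λ : Type*} [AddCommGroup Λ] [LinearOrder Λ] {R : Type*} [CommRing R] {v : R → WithTop Λ}

lemma map_pow_s18 (hv : IsVal v) (c : R) (n : ℕ) : v (c ^ n) = n • v c := by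
  induction n with
  | zero => simpa using hv.2.1
  | succ n ih => rw [pow_succ, hv.2.2.1, ih, succ_nsmul]

lemma natCast_nonneg (hv : IsVal v) (n : ℕ) : 0 ≤ v (n : R) := by
  induction n with
  | zero => simp [hv.1]
  | succ n ih =>
    calc (0 : WithTop Λ) ≤ min (v n) (v 1) := le_min ih hv.2.1.ge
      _ ≤ v (n + 1 : R) := hv.2.2.2 _ _
      _ = v (n + 1 : ℕ) := by push_cast; rfl

lemma inf_le_sum (hv : IsVal v) {ι : Type*} (s : Finset ι) (f : ι → R) :
    s.inf (fun i => v (f i)) ≤ v (∑ i ∈ s, f i) := by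
  classical
  induction s using Finset.induction with
  | empty => simp [hv.1]
  | insert j s hj ih =>
    rw [Finset.sum_insert hj, Finset.inf_insert]
    exact (min_le_min le_rfl ih).trans (hv.2.2.2 _ _)

variable [IsOrderedAddMonoid Λ]

lemma add_nsmul_le_binomial_term (hv : IsVal v) {c : R} {δ ε : WithTop Λ}
    (hc : δ ≤ v c) (hε : δ ≤ ε) (x : R) (i t : ℕ) :
    v x + (i + t) • δ ≤ v ((i + t).choose t * x * c ^ i) + t • ε :=
  calc v x + (i + t) • δ = 0 + (v x + i • δ) + t • δ := by rw [add_nsmul, zero_add, add_assoc]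
    _ ≤ v ((i + t).choose t) + (v x + i • v c) + t • ε :=
      add_le_add (add_le_add (hv.natCast_nonneg _) (add_le_add le_rfl (nsmul_le_nsmul_right hc i)))
        (nsmul_le_nsmul_right hε t)
    _ = v ((i + t).choose t * x * c ^ i) + t • ε := by
      rw [hv.2.2.1, hv.2.2.1, hv.map_pow_s18]
      abel

end IsVal

namespace Polynomial

variable {R : Type*} [CommSemiring R]

lemma taylor_coeff_eq_sum_range (g : R[X]) (c : R) (t : ℕ) :
    (taylor c g).coeff t =
      ∑ i ∈ Finset.range (g.natDegree + 1), ((i + t).choose t : R) * g.coeff (i + t) * c ^ i := by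
  have hdeg : (hasseDeriv t g).natDegree < g.natDegree + 1 :=
    Nat.lt_succ_of_le ((natDegree_hasseDeriv_le g t).trans (Nat.sub_le _ _))
  rw [taylor_coeff, eval_eq_sum_range' hdeg]
  simp [hasseDeriv_coeff]

end Polynomial

section DepthZero

variable {Λ : Type*} [AddCommGroup Λ] [LinearOrder Λ] [IsOrderedAddMonoid Λ]
  {K : Type*} [Field K] {v : K → WithTop Λ}

lemma depthZeroVal_le_coeff (hv : IsVal v) (a : K) (δ : WithTop Λ) (f : K[X]) (s : ℕ) :
    depthZeroVal v a δ f ≤ v ((taylor a f).coeff s) + s • δ := by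
  by_cases hs : s ≤ f.natDegree
  · exact Finset.inf_le (Finset.mem_range.mpr (Nat.lt_succ_of_le hs))
  · rw [coeff_eq_zero_of_natDegree_lt (by rw [natDegree_taylor]; omega), hv.1, top_add]
    exact le_top

lemma depthZeroVal_X_sub_C (hv : IsVal v) (a b : K) (ε : WithTop Λ) :
    depthZeroVal v b ε (X - C a) = min (v (b - a)) ε := by
  have htaylor : taylor b (X - C a) = X + C (b - a) := by
    rw [map_sub, taylor_X, taylor_C, C_sub]; ring
  rw [depthZeroVal, natDegree_X_sub_C, htaylor]
  simp [Finset.range_add_one, hv.2.1, min_comm]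

lemma depthZeroVal_le_depthZeroVal (hv : IsVal v) {a b : K} {δ ε : WithTop Λ}
    (hab : δ ≤ v (b - a)) (hε : δ ≤ ε) (f : K[X]) :
    depthZeroVal v a δ f ≤ depthZeroVal v b ε f := by
  refine Finset.le_inf fun t _ => ?_
  set g := taylor a f
  set T : ℕ → K := fun i => ((i + t).choose t : K) * g.coeff (i + t) * (b - a) ^ i
  have hcoeff : (taylor b f).coeff t = ∑ i ∈ Finset.range (g.natDegree + 1), T i := by
    rw [show taylor b f = taylor (b - a) g by rw [taylor_taylor, sub_add_cancel],
      taylor_coeff_eq_sum_range]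
  obtain ⟨i, -, hi⟩ := Finset.exists_mem_eq_inf (Finset.range (g.natDegree + 1))
    Finset.nonempty_range_add_one (fun i => v (T i))
  calc depthZeroVal v a δ f ≤ v (g.coeff (i + t)) + (i + t) • δ :=
        depthZeroVal_le_coeff hv a δ f (i + t)
    _ ≤ v (T i) + t • ε := hv.add_nsmul_le_binomial_term hab hε _ i t
    _ ≤ v ((taylor b f).coeff t) + t • ε := by
      rw [← hi, hcoeff]
      gcongr
      exact hv.inf_le_sum _ _

end DepthZero

/-- `ω_{a,δ} ≤ ω_{b,ε}` pointwise on `K[x]` if and only if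
`δ ≤ min (v (b - a)) ε`. -/
theorem depthZero_le_iff {K : Type*} [Field K] {Λ : Type*}
    [AddCommGroup Λ] [LinearOrder Λ] [IsOrderedAddMonoid Λ] (v : K → WithTop Λ) (hv : IsVal v)
    (a b : K) (δ ε : WithTop Λ) :
    (∀ f : Polynomial K, depthZeroVal v a δ f ≤ depthZeroVal v b ε f) ↔
      δ ≤ min (v (b - a)) ε := by
  refine ⟨fun h => ?_, fun h => depthZeroVal_le_depthZeroVal hv
    (h.trans (min_le_left _ _)) (h.trans (min_le_right _ _))⟩
  have := h (X - C a)
  rwa [depthZeroVal_X_sub_C hv, depthZeroVal_X_sub_C hv, sub_self, hv.1, min_top_left] at this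
end
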